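/- arXiv:0804.2033 — 2 statements merged into one kernel-verified Lean document; each statement's English description precedes it below -/
import Mathlib

section
/- Let F = (f_1, …, f_m) be a sequence of polynomials in R and v_F : R^m → R the evaluation map. Let g ∈ R^m satisfy g_j = 0 for all j < k and g_k ≠ 0, and set t = lm(g_k). If there exists a nonzero polynomial q in the ideal generated by f_{k+1}, …, f_m such that lm(q) divides t, then there exists g' ∈ R^m with v_F(g') = v_F(g), g'_j = 0 for all j < k, and either g'_k = 0 or lm(g'_k) < t. (This is the mathematical content of the F5 Criterion: a signature whose term is divisible by the head term of an element of the ideal generated by the later input polynomials is not minimal.) -/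
/-!
Write `q = ∑_{i > k} lᵢ fᵢ`. As `lm q ∣ t`, one reduction step `g_k ↦ g_k - u q` by a term `u`
cancels the leading term of `g_k`. It is realised without changing `v_F(g)` by adding `u` times
the syzygy `f_k l - q e_k`: its entries below `k` vanish and its `k`-th entry is `-q`,
because `l` is supported on the indices above `k`.
-/

open MvPolynomial

/-- The leading monomial (exponent vector) of a polynomial with respect to a monomial
order `m`: the `m`-maximum of its support (`0` for the zero polynomial). -/
noncomputable def lm {σ K : Type*} [Field K] (m : MonomialOrder σ)
    (p : MvPolynomial σ K) : σ →₀ ℕ :=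
  m.toSyn.symm (p.support.sup m.toSyn)

/-- The leading coefficient of a polynomial with respect to a monomial order `m`. -/
noncomputable def lc {σ K : Type*} [Field K] (m : MonomialOrder σ)
    (p : MvPolynomial σ K) : K :=
  p.coeff (lm m p)

/-- `γ(p,q)`: the least common multiple (componentwise maximum) of the leading
monomials of `p` and `q`. -/
noncomputable def gam {σ K : Type*} [Field K] (m : MonomialOrder σ)
    (p q : MvPolynomial σ K) : σ →₀ ℕ :=
  lm m p ⊔ lm m q

/-- The S-polynomial of `p` and `q`:
`Spol(p,q) = lc(q)·X^(γ(p,q)-lm(p))·p − lc(p)·X^(γ(p,q)-lm(q))·q`. -/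
noncomputable def Spol {σ K : Type*} [Field K] (m : MonomialOrder σ)
    (p q : MvPolynomial σ K) : MvPolynomial σ K :=
  monomial (gam m p q - lm m p) (lc m q) * p - monomial (gam m p q - lm m q) (lc m p) * q

namespace MonomialOrder

variable {σ R : Type*} [CommRing R] {m : MonomialOrder σ}

theorem reduce_eq_zero_of_degree_eq_zero {f b : MvPolynomial σ R}
    (hb : IsUnit (m.leadingCoeff b)) (hf : m.degree f = 0) (hb0 : m.degree b = 0) :
    m.reduce hb f = 0 := by
  have hbC : b = C (m.leadingCoeff b) := m.eq_C_of_degree_eq_zero hb0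
  rw [reduce, hf, hb0, tsub_zero, monomial_zero', sub_eq_zero]
  conv_rhs => arg 2; rw [hbC]
  rw [← C_mul, mul_right_comm, IsUnit.val_inv_mul, one_mul]
  exact m.eq_C_of_degree_eq_zero hf

theorem reduce_eq_zero_or_degree_lt {f b : MvPolynomial σ R} (hb : IsUnit (m.leadingCoeff b))
    (hbf : m.degree b ≤ m.degree f) :
    m.reduce hb f = 0 ∨ m.degree (m.reduce hb f) ≺[m] m.degree f := by
  by_cases hf : m.degree f = 0
  · exact Or.inl (reduce_eq_zero_of_degree_eq_zero hb hf (nonpos_iff_eq_zero.mp (hf ▸ hbf)))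
  · exact Or.inr (degree_reduce_lt hb hbf hf)

end MonomialOrder

section Syzygy

variable {ι R : Type*} [Fintype ι] [CommRing R]

/-- For `∑ l i • F i = q` this is `F k • l - q • e_k`, a combination of the Koszul syzygies
`F k • e_i - F i • e_k`. -/
def koszulSyzygy [DecidableEq ι] (F l : ι → R) (k : ι) : ι → R :=
  F k • l - Pi.single k (∑ j, l j * F j)

theorem sum_koszulSyzygy_mul [DecidableEq ι] (F l : ι → R) (k : ι) :
    ∑ i, koszulSyzygy F l k i * F i = 0 := by
  simp only [koszulSyzygy, Pi.sub_apply, Pi.smul_apply, smul_eq_mul, Pi.single_apply, sub_mul,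
    Finset.sum_sub_distrib, ite_mul, zero_mul, Finset.sum_ite_eq', Finset.mem_univ, if_true,
    mul_assoc, ← Finset.mul_sum]
  ring

theorem exists_sum_mul_eq_of_mem_span_image {F : ι → R} {s : Set ι} {q : R}
    (hq : q ∈ Ideal.span (F '' s)) : ∃ l : ι → R, (∀ i ∉ s, l i = 0) ∧ ∑ i, l i * F i = q := by
  obtain ⟨l, hls, rfl⟩ := (Finsupp.mem_span_image_iff_linearCombination R).mp hq
  refine ⟨l, fun i hi => Finsupp.notMem_support_iff.mp fun h => hi (hls h), ?_⟩
  rw [Finsupp.linearCombination_apply, Finsupp.sum_fintype _ _ (by simp)]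
  rfl

end Syzygy

theorem f5_criterion_general
    {σ K : Type*} [Field K] (m : MonomialOrder σ)
    {M : ℕ} (F : Fin M → MvPolynomial σ K)
    (g : Fin M → MvPolynomial σ K) (k : Fin M)
    (hg0 : ∀ j, j < k → g j = 0)
    (t : σ →₀ ℕ) (ht : t = lm m (g k))
    (q : MvPolynomial σ K) (hq0 : q ≠ 0)
    (hqI : q ∈ Ideal.span (F '' {i : Fin M | k < i}))
    (hqt : lm m q ≤ t) :
    ∃ g' : Fin M → MvPolynomial σ K,
      (∑ i, g' i * F i) = (∑ i, g i * F i) ∧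
      (∀ j, j < k → g' j = 0) ∧
      (g' k = 0 ∨ m.toSyn (lm m (g' k)) < m.toSyn t) := by
  obtain ⟨l, hl, rfl⟩ := exists_sum_mul_eq_of_mem_span_image hqI
  have hq : IsUnit (m.leadingCoeff (∑ i, l i * F i)) :=
    (m.leadingCoeff_ne_zero_iff.mpr hq0).isUnit
  set u := monomial (m.degree (g k) - m.degree (∑ i, l i * F i))
    (hq.unit⁻¹ * m.leadingCoeff (g k))
  refine ⟨g + u • koszulSyzygy F l k, ?_, ?_, ?_⟩
  · simp only [Pi.add_apply, Pi.smul_apply, smul_eq_mul, add_mul, Finset.sum_add_distrib,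
      mul_assoc, ← Finset.mul_sum, sum_koszulSyzygy_mul, mul_zero, add_zero]
  · intro j hj
    simp [koszulSyzygy, hg0 j hj, hl j (not_lt.mpr hj.le), hj.ne]
  · have hreduce : (g + u • koszulSyzygy F l k) k = m.reduce hq (g k) := by
      simp [koszulSyzygy, MonomialOrder.reduce, hl k (lt_irrefl k), u, sub_eq_add_neg]
    subst ht
    rw [hreduce]
    exact m.reduce_eq_zero_or_degree_lt hq hqt

/-- **F5 Criterion** (mathematical content): if `g ∈ R^M` has `g_j = 0` for `j < k`,
`g_k ≠ 0` with `t = lm(g_k)`, and some nonzero `q` in the ideal generated by the later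
input polynomials `f_{k+1}, …, f_M` has `lm(q) ∣ t`, then `v_F(g)` is also represented by
some `g'` with the same vanishing pattern below `k` and a strictly smaller signature term:
`g'_k = 0` or `lm(g'_k) ≺ t`. -/
theorem f5_criterion
    {σ K : Type*} [Field K] (m : MonomialOrder σ)
    {M : ℕ} (F : Fin M → MvPolynomial σ K)
    (g : Fin M → MvPolynomial σ K) (k : Fin M)
    (hg0 : ∀ j, j < k → g j = 0) (hgk : g k ≠ 0)
    (t : σ →₀ ℕ) (ht : t = lm m (g k))
    (q : MvPolynomial σ K) (hq0 : q ≠ 0)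
    (hqI : q ∈ Ideal.span (F '' {i : Fin M | k < i}))
    (hqt : lm m q ≤ t) :
    ∃ g' : Fin M → MvPolynomial σ K,
      (∑ i, g' i * F i) = (∑ i, g i * F i) ∧
      (∀ j, j < k → g' j = 0) ∧
      (g' k = 0 ∨ m.toSyn (lm m (g' k)) < m.toSyn t) :=
  f5_criterion_general m F g k hg0 t ht q hq0 hqI hqt
end

section
/- Let p, q, h be nonzero polynomials in R such that lm(h) divides γ(p,q). Then γ(p,h) and γ(q,h) both divide γ(p,q), and the following exact identity between S-polynomials holds: lc(h)·Spol(p,q) = lc(q)·X^{γ(p,q)−γ(p,h)}·Spol(p,h) − lc(p)·X^{γ(p,q)−γ(q,h)}·Spol(q,h). In particular, Spol(p,q) is a combination of monomial multiples of Spol(p,h) and Spol(q,h), each multiple having leading monomial dividing γ(p,q). -/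
open MvPolynomial

/-- If `lm(h)` divides `γ(p,q)` then `γ(p,h)` and `γ(q,h)` divide `γ(p,q)` and
`lc(h)·Spol(p,q) = lc(q)·X^(γ(p,q)−γ(p,h))·Spol(p,h) − lc(p)·X^(γ(p,q)−γ(q,h))·Spol(q,h)`. -/
theorem spol_triangle {σ K : Type*} [Field K] (m : MonomialOrder σ)
    (p q h : MvPolynomial σ K) (hp : p ≠ 0) (hq : q ≠ 0) (hh : h ≠ 0)
    (hdvd : lm m h ≤ gam m p q) :
    gam m p h ≤ gam m p q ∧ gam m q h ≤ gam m p q ∧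
    C (lc m h) * Spol m p q =
      C (lc m q) * monomial (gam m p q - gam m p h) (1 : K) * Spol m p h
      - C (lc m p) * monomial (gam m p q - gam m q h) (1 : K) * Spol m q h := by
  have h1 : gam m p h ≤ gam m p q := sup_le le_sup_left hdvd
  have h2 : gam m q h ≤ gam m p q := sup_le le_sup_right hdvd
  refine ⟨h1, h2, ?_⟩
  have E1 : gam m p q - gam m p h + (gam m p h - lm m p) = gam m p q - lm m p :=
    tsub_add_tsub_cancel h1 le_sup_left
  have E2 : gam m p q - gam m p h + (gam m p h - lm m h) = gam m p q - lm m h :=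
    tsub_add_tsub_cancel h1 le_sup_right
  have E3 : gam m p q - gam m q h + (gam m q h - lm m q) = gam m p q - lm m q :=
    tsub_add_tsub_cancel h2 le_sup_left
  have E4 : gam m p q - gam m q h + (gam m q h - lm m h) = gam m p q - lm m h :=
    tsub_add_tsub_cancel h2 le_sup_right
  simp only [Spol, mul_sub, ← mul_assoc, C_mul_monomial, monomial_mul, mul_one, one_mul]
  rw [E1, E2, E3, E4, mul_comm (lc m h) (lc m q), mul_comm (lc m h) (lc m p),
    mul_comm (lc m p) (lc m q)]
  abel
end
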